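/- For every real m with 2 < m < 3, every integer K ≥ 2, and every z ∈ ∇_K, one has B_K(φ_2 − φ_m)(z) ≥ 1 − α − (m(m−1−α)/2)·φ_{m−1}(z) − [(1+θ)·φ_2(z) − (m(m−1+θ)/2)·φ_m(z)] − [3(θ+α)/(2(K−1)) + α(1+2e²)/(2(K+1))], where B_K(φ_2 − φ_m)(z) := B_K φ_2(z) − B_K φ_m(z). -/

import Mathlib

/-!
Write `f(x) = 2x - m x^(m-1)` for the partial derivatives of `φ₂ - φ_m` and
`w_i = (∑ j, z_j r_j) p_i + (1 - z_i)^(K+1) ≥ 0`. Using `z_i r_i = (1 - z_i)(1 - (1 - z_i)^K)`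
and `∑ z_i = 1`, the difference `B_K φ₂ - B_K φ_m` is exactly the main term of the bound plus
`(θ+α)/(2(K-1)) ∑ (1 - z_i) f(z_i)` plus `(α/2) ∑ f(z_i) w_i`.
Since `f(x) ≥ -x` on `[0,1]`, the first sum is at least `-1`. If `f(x) < 0` then
`x^(m-2) > 2/m`, hence `log x > -1/2` and `x > 3/5`; this happens for at most one coordinate
`i`, and for it `p_i ≤ ((1 - z_i)/z_i)^K ≤ (2/3)^K` and `(1 - z_i)^(K+1) ≤ (2/5)^(K+1)`, so
`w_i ≤ 5/(K+1)`. Finally `5 ≤ 1 + 2e²`.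
-/

open Finset

/-- The function `r(u)`: `r(u) = (1-u)(1-(1-u)^K)/u` for `u > 0`, `r(0) = K`. -/
noncomputable def rfun (K : ℕ) (u : ℝ) : ℝ :=
  if u = 0 then (K : ℝ) else (1 - u) * (1 - (1 - u) ^ K) / u

/-- The simplex `Δ_K`. -/
def DeltaK (K : ℕ) : Set (Fin K → ℝ) :=
  {z | (∀ i, 0 ≤ z i) ∧ ∑ i, z i = 1}

/-- The ordered simplex `∇_K`. -/
def NablaK (K : ℕ) : Set (Fin K → ℝ) :=
  {z | z ∈ DeltaK K ∧ ∀ i j : Fin K, i ≤ j → z j ≤ z i}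

/-- The mainland frequencies `p_i(z)`. -/
noncomputable def pfun (K : ℕ) (z : Fin K → ℝ) (i : Fin K) : ℝ :=
  (1 - z i) ^ K / ∑ l, (1 - z l) ^ K

/-- The drift coefficients `b_i(z)`. -/
noncomputable def bdrift (K : ℕ) (α θ : ℝ) (z : Fin K → ℝ) (i : Fin K) : ℝ :=
  (1 / 2) * ((θ + α) * (1 - z i) / ((K : ℝ) - 1) - (θ + α) * z i
    + α * pfun K z i * (∑ j, z j * rfun K (z j)) - α * z i * rfun K (z i))

/-- The power sum `φ_m(z) = ∑_{i=1}^K z_i^m` (real exponent). -/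
noncomputable def phiK (K : ℕ) (m : ℝ) (z : Fin K → ℝ) : ℝ := ∑ i, z i ^ m

/-- The generator applied to the power sum `φ_m`:
`B_K φ_m(z) = (m(m-1)/2) ∑ z_i^{m-1}(1-z_i) + m ∑ b_i(z) z_i^{m-1}`. -/
noncomputable def BKphi (K : ℕ) (α θ : ℝ) (m : ℝ) (z : Fin K → ℝ) : ℝ :=
  (m * (m - 1) / 2) * ∑ i, z i ^ (m - 1) * (1 - z i)
    + m * ∑ i, bdrift K α θ z i * z i ^ (m - 1)

lemma three_fifths_lt_exp_neg_half : (3 / 5 : ℝ) < Real.exp (-(1 / 2)) := by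
  have hsq : Real.exp (1 / 2) * Real.exp (1 / 2) = Real.exp 1 := by
    rw [← Real.exp_add]; norm_num
  have he : Real.exp (1 / 2) < 5 / 3 := by
    nlinarith [Real.exp_pos (1 / 2), Real.exp_one_lt_d9]
  rw [Real.exp_neg, lt_inv_comm₀ (by norm_num) (Real.exp_pos _)]
  linarith

lemma nat_sq_mul_two_pow_le (n : ℕ) : n ^ 2 * 2 ^ n ≤ 4 * 3 ^ n := by
  induction n with
  | zero => norm_num
  | succ k ih =>
    rcases lt_or_ge k 5 with hk | hk
    · interval_cases k <;> norm_num
    · calc (k + 1) ^ 2 * 2 ^ (k + 1) = 2 * (k + 1) ^ 2 * 2 ^ k := by ring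
        _ ≤ 3 * k ^ 2 * 2 ^ k := Nat.mul_le_mul_right _ (by nlinarith)
        _ = 3 * (k ^ 2 * 2 ^ k) := by ring
        _ ≤ 3 * (4 * 3 ^ k) := by gcongr
        _ = 4 * 3 ^ (k + 1) := by ring

lemma sub_one_mul_two_thirds_pow_le (K : ℕ) : ((K : ℝ) - 1) * (2 / 3) ^ K ≤ 4 / (K + 1) := by
  have h : ((K : ℝ) ^ 2 * 2 ^ K) ≤ 4 * 3 ^ K := by exact_mod_cast nat_sq_mul_two_pow_le K
  rw [le_div_iff₀ (by positivity), div_pow]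
  have h3 : (0 : ℝ) < 3 ^ K := by positivity
  calc ((K : ℝ) - 1) * (2 ^ K / 3 ^ K) * (K + 1) = ((K : ℝ) ^ 2 - 1) * 2 ^ K / 3 ^ K := by ring
    _ ≤ (K : ℝ) ^ 2 * 2 ^ K / 3 ^ K := by gcongr; linarith
    _ ≤ 4 := by rw [div_le_iff₀ h3]; exact h

lemma two_fifths_pow_succ_le (K : ℕ) : (2 / 5 : ℝ) ^ (K + 1) ≤ 1 / (K + 1) := by
  have h : ((K : ℝ) + 1) ≤ 2 ^ (K + 1) := by exact_mod_cast (Nat.lt_two_pow_self (n := K + 1)).le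
  rw [le_div_iff₀ (by positivity)]
  calc (2 / 5 : ℝ) ^ (K + 1) * (K + 1) ≤ (1 / 2) ^ (K + 1) * 2 ^ (K + 1) :=
        mul_le_mul (pow_le_pow_left₀ (by norm_num) (by norm_num) _) h (by positivity) (by positivity)
    _ = 1 := by rw [← mul_pow]; norm_num

lemma neg_le_sum_mul_of_unique_neg {ι : Type*} [Fintype ι] {f w : ι → ℝ} {c : ℝ}
    (hc : 0 ≤ c) (hw : ∀ i, 0 ≤ w i) (hf : ∀ i, -1 ≤ f i)
    (hneg : ∀ i, f i < 0 → w i ≤ c ∧ ∀ j ≠ i, 0 ≤ f j) :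
    -c ≤ ∑ i, f i * w i := by
  classical
  by_cases h : ∃ i, f i < 0
  · obtain ⟨i, hi⟩ := h
    obtain ⟨hwi, hothers⟩ := hneg i hi
    have hrest : 0 ≤ ∑ j ∈ univ.erase i, f j * w j :=
      sum_nonneg fun j hj => mul_nonneg (hothers j (ne_of_mem_erase hj)) (hw j)
    rw [← add_sum_erase _ _ (mem_univ i)]
    nlinarith [mul_nonneg (neg_le_iff_add_nonneg'.mp (hf i)) (hw i)]
  · push Not at h
    exact (neg_nonpos.mpr hc).trans (sum_nonneg fun i _ => mul_nonneg (h i) (hw i))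

noncomputable def gradDiff (m x : ℝ) : ℝ := 2 * x - m * x ^ (m - 1)

section gradDiff

variable {m x : ℝ}

lemma neg_le_gradDiff (hm2 : 2 ≤ m) (hm3 : m ≤ 3) (hx0 : 0 ≤ x) (hx1 : x ≤ 1) :
    -x ≤ gradDiff m x := by
  have h := Real.rpow_le_self_of_le_one hx0 hx1 (by linarith : 1 ≤ m - 1)
  unfold gradDiff
  nlinarith [Real.rpow_nonneg hx0 (m - 1)]

lemma neg_le_one_sub_mul_gradDiff (hm2 : 2 ≤ m) (hm3 : m ≤ 3) (hx0 : 0 ≤ x) (hx1 : x ≤ 1) :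
    -x ≤ (1 - x) * gradDiff m x := by
  have h := neg_le_gradDiff hm2 hm3 hx0 hx1
  nlinarith [mul_nonneg (sub_nonneg.mpr hx1) (neg_le_iff_add_nonneg.mp h)]

lemma three_fifths_lt_of_gradDiff_neg (hm : 2 < m) (hx : 0 ≤ x) (hf : gradDiff m x < 0) :
    3 / 5 < x := by
  have hx0 : 0 < x := by
    rcases hx.eq_or_lt with rfl | h
    · simp [gradDiff, Real.zero_rpow (by linarith : m - 1 ≠ 0)] at hf
    · exact h
  have hpow : 2 / m < x ^ (m - 2) := by
    have e : x ^ (m - 1) = x ^ (m - 2) * x := by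
      rw [← Real.rpow_add_one hx0.ne']; ring_nf
    have h : 2 * x < m * x ^ (m - 2) * x := by
      unfold gradDiff at hf; rw [e] at hf; linarith
    rw [div_lt_iff₀ (by linarith)]
    linarith [lt_of_mul_lt_mul_right h hx0.le]
  have hlog : -(1 / 2) < Real.log x := by
    have h1 : Real.log (2 / m) < (m - 2) * Real.log x := by
      rw [← Real.log_rpow hx0]; exact Real.log_lt_log (by positivity) hpow
    have h2 : Real.log (2 / m) = -Real.log (m / 2) := by rw [← Real.log_inv, inv_div]
    have h3 := Real.log_le_sub_one_of_pos (by linarith : 0 < m / 2)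
    nlinarith
  calc (3 / 5 : ℝ) < Real.exp (-(1 / 2)) := three_fifths_lt_exp_neg_half
    _ < x := by rw [← Real.exp_log hx0]; exact Real.exp_lt_exp.mpr hlog

end gradDiff

namespace DeltaK

variable {K : ℕ} {z : Fin K → ℝ}

lemma le_one (hz : z ∈ DeltaK K) (i : Fin K) : z i ≤ 1 := by
  rw [← hz.2]
  exact single_le_sum (fun j _ => hz.1 j) (mem_univ i)

lemma add_le_one (hz : z ∈ DeltaK K) {i j : Fin K} (hij : i ≠ j) : z i + z j ≤ 1 := by
  rw [← hz.2, ← sum_pair hij]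
  exact sum_le_sum_of_subset_of_nonneg (subset_univ _) fun k _ _ => hz.1 k

end DeltaK

lemma mul_rfun (K : ℕ) (u : ℝ) : u * rfun K u = (1 - u) * (1 - (1 - u) ^ K) := by
  unfold rfun
  split_ifs with h
  · simp [h]
  · field_simp

lemma mul_rfun_mem_Icc (K : ℕ) {u : ℝ} (hu0 : 0 ≤ u) (hu1 : u ≤ 1) :
    u * rfun K u ∈ Set.Icc 0 (1 - u) := by
  have hpow0 : 0 ≤ (1 - u) ^ K := pow_nonneg (by linarith) K
  have hpow1 : (1 - u) ^ K ≤ 1 := pow_le_one₀ (by linarith) (by linarith)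
  rw [mul_rfun]
  constructor <;> nlinarith

noncomputable def alphaWeight (K : ℕ) (z : Fin K → ℝ) (i : Fin K) : ℝ :=
  (∑ j, z j * rfun K (z j)) * pfun K z i + (1 - z i) ^ (K + 1)

lemma bdrift_eq (K : ℕ) (α θ : ℝ) (z : Fin K → ℝ) (i : Fin K) :
    bdrift K α θ z i = (θ + α) / (2 * ((K : ℝ) - 1)) * (1 - z i) - (θ + α) / 2 * z i
      + α / 2 * (alphaWeight K z i - (1 - z i)) := by
  unfold bdrift alphaWeight
  rw [← div_div]
  linear_combination (-α / 2) * mul_rfun K (z i)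

section simplex

variable {K : ℕ} {z : Fin K → ℝ} {m : ℝ}

lemma sum_mul_rfun_nonneg (hz : z ∈ DeltaK K) : 0 ≤ ∑ j, z j * rfun K (z j) :=
  sum_nonneg fun j _ => (mul_rfun_mem_Icc K (hz.1 j) (DeltaK.le_one hz j)).1

lemma sum_mul_rfun_le (hz : z ∈ DeltaK K) : ∑ j, z j * rfun K (z j) ≤ K - 1 :=
  calc ∑ j, z j * rfun K (z j) ≤ ∑ j, (1 - z j) :=
        sum_le_sum fun j _ => (mul_rfun_mem_Icc K (hz.1 j) (DeltaK.le_one hz j)).2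
    _ = K - 1 := by simp [sum_sub_distrib, hz.2]

lemma pfun_nonneg (hz : z ∈ DeltaK K) (i : Fin K) : 0 ≤ pfun K z i :=
  div_nonneg (pow_nonneg (sub_nonneg.mpr (DeltaK.le_one hz i)) K)
    (sum_nonneg fun l _ => pow_nonneg (sub_nonneg.mpr (DeltaK.le_one hz l)) K)

lemma pfun_le (hz : z ∈ DeltaK K) {i j : Fin K} (hji : j ≠ i) (hi : 0 < z i) :
    pfun K z i ≤ ((1 - z i) / z i) ^ K := by
  have hsum : z i ^ K ≤ ∑ l, (1 - z l) ^ K :=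
    calc z i ^ K ≤ (1 - z j) ^ K :=
          pow_le_pow_left₀ hi.le (by linarith [DeltaK.add_le_one hz hji]) K
      _ ≤ ∑ l, (1 - z l) ^ K :=
          single_le_sum (fun l _ => pow_nonneg (sub_nonneg.mpr (DeltaK.le_one hz l)) K)
            (mem_univ j)
  rw [div_pow]
  exact div_le_div_of_nonneg_left (pow_nonneg (sub_nonneg.mpr (DeltaK.le_one hz i)) K)
    (by positivity) hsum

lemma alphaWeight_nonneg (hz : z ∈ DeltaK K) (i : Fin K) : 0 ≤ alphaWeight K z i :=
  add_nonneg (mul_nonneg (sum_mul_rfun_nonneg hz) (pfun_nonneg hz i))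
    (pow_nonneg (sub_nonneg.mpr (DeltaK.le_one hz i)) _)

lemma alphaWeight_le (hz : z ∈ DeltaK K) (hK : 2 ≤ K) {i : Fin K} (hi : 3 / 5 < z i) :
    alphaWeight K z i ≤ 5 / (K + 1) := by
  obtain ⟨j, hji⟩ := Fintype.exists_ne_of_one_lt_card (by rw [Fintype.card_fin]; omega) i
  have hi0 : 0 < z i := by linarith
  have hK' : (2 : ℝ) ≤ K := by exact_mod_cast hK
  have hp : pfun K z i ≤ (2 / 3) ^ K :=
    (pfun_le hz hji hi0).trans <| pow_le_pow_left₀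
      (div_nonneg (sub_nonneg.mpr (DeltaK.le_one hz i)) hi0.le)
      (by rw [div_le_iff₀ hi0]; linarith) K
  have hmain : (∑ j, z j * rfun K (z j)) * pfun K z i ≤ 4 / (K + 1) :=
    (mul_le_mul (sum_mul_rfun_le hz) hp (pfun_nonneg hz i) (by linarith)).trans
      (sub_one_mul_two_thirds_pow_le K)
  have htail : (1 - z i) ^ (K + 1) ≤ 1 / (K + 1) :=
    (pow_le_pow_left₀ (sub_nonneg.mpr (DeltaK.le_one hz i)) (by linarith) _).trans
      (two_fifths_pow_succ_le K)
  unfold alphaWeight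
  linarith [show (4 : ℝ) / (K + 1) + 1 / (K + 1) = 5 / (K + 1) by ring]

lemma neg_one_le_sum_one_sub_mul_gradDiff (hz : z ∈ DeltaK K) (hm2 : 2 ≤ m) (hm3 : m ≤ 3) :
    -1 ≤ ∑ i, (1 - z i) * gradDiff m (z i) := by
  calc (-1 : ℝ) = ∑ i, -z i := by rw [sum_neg_distrib, hz.2]
    _ ≤ _ := sum_le_sum fun i _ =>
      neg_le_one_sub_mul_gradDiff hm2 hm3 (hz.1 i) (DeltaK.le_one hz i)

lemma neg_le_sum_gradDiff_mul_alphaWeight (hz : z ∈ DeltaK K) (hK : 2 ≤ K) (hm2 : 2 < m)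
    (hm3 : m ≤ 3) : -(5 / (K + 1)) ≤ ∑ i, gradDiff m (z i) * alphaWeight K z i := by
  refine neg_le_sum_mul_of_unique_neg (by positivity) (alphaWeight_nonneg hz) (fun i => ?_)
    (fun i hi => ?_)
  · linarith [neg_le_gradDiff hm2.le hm3 (hz.1 i) (DeltaK.le_one hz i), DeltaK.le_one hz i]
  · have hzi := three_fifths_lt_of_gradDiff_neg hm2 (hz.1 i) hi
    refine ⟨alphaWeight_le hz hK hzi, fun j hji => not_lt.mp fun hj => ?_⟩
    linarith [three_fifths_lt_of_gradDiff_neg hm2 (hz.1 j) hj, DeltaK.add_le_one hz hji]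

end simplex

lemma BKphi_two_sub_BKphi_eq {K : ℕ} {z : Fin K → ℝ} (hz : z ∈ DeltaK K) (α θ : ℝ) {m : ℝ}
    (hm : m ≠ 0) :
    BKphi K α θ 2 z - BKphi K α θ m z =
      1 - α - m * (m - 1 - α) / 2 * phiK K (m - 1) z
        - ((1 + θ) * phiK K 2 z - m * (m - 1 + θ) / 2 * phiK K m z)
        + (θ + α) / (2 * ((K : ℝ) - 1)) * ∑ i, (1 - z i) * gradDiff m (z i)
        + α / 2 * ∑ i, gradDiff m (z i) * alphaWeight K z i := by
  have hpow : ∀ i, z i ^ m = z i ^ (m - 1) * z i := fun i => by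
    rw [← Real.rpow_add_one' (hz.1 i) (by simpa using hm), sub_add_cancel]
  -- the constant `1 - α` is `(1 - α) * ∑ i, z i`, which puts everything under one sum
  have key : BKphi K α θ 2 z - BKphi K α θ m z
      - (-m * (m - 1 - α) / 2 * phiK K (m - 1) z
        - ((1 + θ) * phiK K 2 z - m * (m - 1 + θ) / 2 * phiK K m z)
        + (θ + α) / (2 * ((K : ℝ) - 1)) * ∑ i, (1 - z i) * gradDiff m (z i)
        + α / 2 * ∑ i, gradDiff m (z i) * alphaWeight K z i) = (1 - α) * ∑ i, z i := by
    simp only [BKphi, phiK, gradDiff, bdrift_eq, mul_sum, ← sum_add_distrib, ← sum_sub_distrib]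
    refine sum_congr rfl fun i _ => ?_
    norm_num only [Real.rpow_two, Real.rpow_one, hpow i]
    ring
  rw [hz.2] at key
  linear_combination key

theorem stmt10_general (α θ : ℝ) (hα0 : 0 ≤ α) (hθ : -α < θ)
    (m : ℝ) (hm2 : 2 < m) (hm3 : m < 3) :
    ∀ K : ℕ, 2 ≤ K → ∀ z ∈ NablaK K,
      1 - α - (m * (m - 1 - α) / 2) * phiK K (m - 1) z
        - ((1 + θ) * phiK K 2 z - (m * (m - 1 + θ) / 2) * phiK K m z)
        - (3 * (θ + α) / (2 * ((K : ℝ) - 1))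
            + α * (1 + 2 * Real.exp 2) / (2 * ((K : ℝ) + 1)))
      ≤ BKphi K α θ 2 z - BKphi K α θ m z := by
  intro K hK z hz
  have hK' : (2 : ℝ) ≤ K := by exact_mod_cast hK
  have hc : 0 ≤ (θ + α) / (2 * ((K : ℝ) - 1)) := div_nonneg (by linarith) (by linarith)
  have hα2 : 0 ≤ α / 2 := by linarith
  have hA := mul_le_mul_of_nonneg_left
    (neg_one_le_sum_one_sub_mul_gradDiff hz.1 hm2.le hm3.le) hc
  have hG := mul_le_mul_of_nonneg_left
    (neg_le_sum_gradDiff_mul_alphaWeight hz.1 hK hm2 hm3.le) hα2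
  have he : 5 / (K + 1) ≤ (1 + 2 * Real.exp 2) / ((K : ℝ) + 1) := by
    gcongr
    linarith [Real.add_one_le_exp 2]
  rw [BKphi_two_sub_BKphi_eq hz.1 α θ (by linarith), mul_div_assoc 3, mul_div_mul_comm α]
  linarith [mul_le_mul_of_nonneg_left he hα2]

/-- For every real `2 < m < 3`, every integer `K ≥ 2`, and every
`z ∈ ∇_K`, the lower bound on `B_K(φ_2 − φ_m)(z) := B_K φ_2(z) − B_K φ_m(z)` holds. -/
theorem stmt10 (α θ : ℝ) (hα0 : 0 ≤ α) (hα1 : α < 1) (hθ : -α < θ)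
    (m : ℝ) (hm2 : 2 < m) (hm3 : m < 3) :
    ∀ K : ℕ, 2 ≤ K → ∀ z ∈ NablaK K,
      1 - α - (m * (m - 1 - α) / 2) * phiK K (m - 1) z
        - ((1 + θ) * phiK K 2 z - (m * (m - 1 + θ) / 2) * phiK K m z)
        - (3 * (θ + α) / (2 * ((K : ℝ) - 1))
            + α * (1 + 2 * Real.exp 2) / (2 * ((K : ℝ) + 1)))
      ≤ BKphi K α θ 2 z - BKphi K α θ m z :=
  stmt10_general α θ hα0 hθ m hm2 hm3
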